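/- arXiv:1007.4586 — 3 statements merged into one kernel-verified Lean document; each statement's English description precedes it below -/
import Mathlib

section
/- Let A be a nonempty finite set (agents) and K a finite set (songs), let y : K → ℝ with y k ≥ 0 for all k, and set Y = ∑_{k ∈ K} y k. Let z : A → ℝ with z i ≥ 0 (coarse demands) and x : A → K → ℝ with 0 ≤ x i k ≤ y k for all i, k, such that for every agent i, ∑_{k ∈ K} x i k = min (z i) Y. Define the excess demand d i = max 0 (z i − Y), the excess supply l k = y k − max_{i ∈ A} x i k, the total bought b = ∑_{i ∈ A} z i, and the total sold s = ∑_{k ∈ K} (l k + ∑_{i ∈ A} x i k). If b = s, then d i = 0 for every i ∈ A and l k = 0 for every k ∈ K. -/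
/-- Paper's Lemma 3.1: if total songs bought equals total songs sold in a digital
category, there is no excess demand and no excess supply. -/
theorem stmt0 {A K : Type*} [Fintype A] [Nonempty A] [Fintype K]
    (y : K → ℝ) (hy : ∀ k, 0 ≤ y k)
    (z : A → ℝ) (hz : ∀ i, 0 ≤ z i)
    (x : A → K → ℝ) (hx0 : ∀ i k, 0 ≤ x i k) (hxy : ∀ i k, x i k ≤ y k)
    (hsum : ∀ i, ∑ k, x i k = min (z i) (∑ k, y k))
    (hbs : ∑ i, z i =
      ∑ k, ((y k - Finset.univ.sup' Finset.univ_nonempty (fun i => x i k)) +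
        ∑ i, x i k)) :
    (∀ i : A, max 0 (z i - ∑ k, y k) = 0) ∧
    (∀ k : K, y k - Finset.univ.sup' Finset.univ_nonempty (fun i => x i k) = 0) := by
  set Y := ∑ k, y k with hY
  set l : K → ℝ := fun k => y k - Finset.univ.sup' Finset.univ_nonempty (fun i => x i k)
    with hl
  have hl_nonneg : ∀ k, 0 ≤ l k := by
    intro k
    have : Finset.univ.sup' Finset.univ_nonempty (fun i => x i k) ≤ y k :=
      Finset.sup'_le _ _ fun i _ => hxy i k
    simp only [hl]
    linarith
  have hd_nonneg : ∀ i, 0 ≤ max 0 (z i - Y) := fun i => le_max_left _ _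
  -- key identity: sum of excess demands = sum of excess supplies
  have key : ∑ i, max 0 (z i - Y) = ∑ k, l k := by
    have h1 : ∑ k, (l k + ∑ i, x i k) = ∑ k, l k + ∑ i, min (z i) Y := by
      rw [Finset.sum_add_distrib, Finset.sum_comm]
      simp_rw [hsum]
    have h2 : ∀ i, max 0 (z i - Y) = z i - min (z i) Y := by
      intro i
      rcases le_total (z i) Y with h | h
      · rw [min_eq_left h, max_eq_left (by linarith : z i - Y ≤ 0)]; ring
      · rw [min_eq_right h, max_eq_right (by linarith : (0:ℝ) ≤ z i - Y)]
    simp_rw [h2, Finset.sum_sub_distrib]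
    rw [hbs, h1]
    ring
  have hdall : ∀ i, max 0 (z i - Y) = 0 := by
    by_contra h
    push_neg at h
    obtain ⟨i, hi⟩ := h
    have hzi : Y < z i := by
      by_contra hle
      push_neg at hle
      exact hi (max_eq_left (by linarith))
    -- agent i gets min(z i, Y) = Y, so x i k = y k for all k
    have hxi : ∑ k, x i k = Y := by rw [hsum i, min_eq_right hzi.le]
    have hxik : ∀ k, x i k = y k := by
      have : ∑ k, (y k - x i k) = 0 := by
        rw [Finset.sum_sub_distrib, hxi]; ring
      intro k
      have h0 := (Finset.sum_eq_zero_iff_of_nonneg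
        (fun k _ => by linarith [hxy i k])).mp this k (Finset.mem_univ k)
      linarith
    have hlzero : ∀ k, l k = 0 := by
      intro k
      have hs : y k ≤ Finset.univ.sup' Finset.univ_nonempty (fun i => x i k) := by
        rw [← hxik k]
        exact Finset.le_sup' (fun j => x j k) (Finset.mem_univ i)
      have h0 := hl_nonneg k
      simp only [hl] at h0 ⊢
      linarith
    have : ∑ i, max 0 (z i - Y) = 0 := by
      rw [key]; exact Finset.sum_eq_zero fun k _ => hlzero k
    exact hi ((Finset.sum_eq_zero_iff_of_nonneg
      (fun j _ => hd_nonneg j)).mp this i (Finset.mem_univ i))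
  refine ⟨hdall, ?_⟩
  have : ∑ k, l k = 0 := by
    rw [← key]; exact Finset.sum_eq_zero fun i _ => hdall i
  exact fun k => (Finset.sum_eq_zero_iff_of_nonneg
    (fun k _ => hl_nonneg k)).mp this k (Finset.mem_univ k)
end

section
/- Let g ∈ ℕ and let b, s : Fin (g+1) → ℝ with s 0 ≥ 0 and s j > 0 for all j ≠ 0. Define r : Fin (g+1) → ℝ by r 0 = (b 0 + 1)/(s 0 + 1) and r j = b j / s j for j ≠ 0. Let p lie in the standard simplex Δ = {q : Fin (g+1) → ℝ | (∀ j, q j ≥ 0) ∧ ∑_j q j = 1} and maximize q ↦ ∑_j q j * r j over Δ. If ∑_j p j * b j = ∑_j p j * s j, and b j > s j for every j with p j = 0, then p j > 0 for all j and b j = s j for all j. -/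
/-- Arithmetic core of the forward direction of the paper's Theorem 5.8: at a
fixed point of the price-update rule, if total money spent equals total money
earned and demand exceeds supply at price zero, then all prices are positive
and every market clears. -/
theorem stmt11 (g : ℕ) (b s : Fin (g + 1) → ℝ)
    (hs0 : 0 ≤ s 0) (hsj : ∀ j, j ≠ 0 → 0 < s j)
    (r : Fin (g + 1) → ℝ)
    (hr0 : r 0 = (b 0 + 1) / (s 0 + 1))
    (hrj : ∀ j, j ≠ 0 → r j = b j / s j)
    (p : Fin (g + 1) → ℝ) (hp : (∀ j, p j ≥ 0) ∧ ∑ j, p j = 1)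
    (hmax : ∀ q : Fin (g + 1) → ℝ, ((∀ j, q j ≥ 0) ∧ ∑ j, q j = 1) →
      ∑ j, q j * r j ≤ ∑ j, p j * r j)
    (hbal : ∑ j, p j * b j = ∑ j, p j * s j)
    (hzero : ∀ j, p j = 0 → s j < b j) :
    (∀ j, 0 < p j) ∧ (∀ j, b j = s j) := by
  obtain ⟨hpnn, hpsum⟩ := hp
  set V := ∑ j, p j * r j with hV
  -- weights
  set w : Fin (g + 1) → ℝ := fun j => if j = 0 then s 0 + 1 else s j with hw
  have hwpos : ∀ j, 0 < w j := by
    intro j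
    by_cases hj : j = 0
    · simp [hw, hj]; linarith
    · simp [hw, hj]; exact hsj j hj
  -- every r k is at most V
  have hA : ∀ k, r k ≤ V := by
    intro k
    have h := hmax (fun i => if i = k then 1 else 0)
      ⟨by intro j; split <;> norm_num,
       by simp⟩
    simpa [ite_mul] using h
  -- positive-price goods achieve the max
  have hB : ∀ j, 0 < p j → r j = V := by
    intro j hj
    have h0 : ∑ i, p i * (V - r i) = 0 := by
      simp only [mul_sub, Finset.sum_sub_distrib, ← Finset.sum_mul, hpsum]
      ring
    have hnn : ∀ i ∈ Finset.univ, 0 ≤ p i * (V - r i) := fun i _ =>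
      mul_nonneg (hpnn i) (by linarith [hA i])
    have := (Finset.sum_eq_zero_iff_of_nonneg hnn).mp h0 j (Finset.mem_univ j)
    have h1 : V - r j = 0 := by
      rcases mul_eq_zero.mp this with h | h
      · exact absurd h (ne_of_gt hj)
      · exact h
    linarith
  -- key termwise identity
  have hkey : ∀ j, p j * (b j - s j) = (p j * w j) * (r j - 1) := by
    intro j
    by_cases hj : j = 0
    · subst hj
      have hne : s 0 + 1 ≠ 0 := by linarith
      simp only [hw, if_pos rfl, hr0]
      field_simp
      ring
    · have hne : s j ≠ 0 := ne_of_gt (hsj j hj)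
      simp only [hw, if_neg hj, hrj j hj]
      field_simp
  have hsum0 : ∑ j, (p j * w j) * (r j - 1) = 0 := by
    rw [← Finset.sum_congr rfl fun j _ => hkey j]
    simp [mul_sub, Finset.sum_sub_distrib, hbal]
  -- all prices positive
  have hppos : ∀ j, 0 < p j := by
    by_contra hc
    push_neg at hc
    obtain ⟨k, hk⟩ := hc
    have hpk : p k = 0 := le_antisymm hk (hpnn k)
    have hrk : 1 < r k := by
      have hbs := hzero k hpk
      by_cases hk0 : k = 0
      · subst hk0
        rw [hr0]
        rw [lt_div_iff₀ (by linarith : (0:ℝ) < s 0 + 1)]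
        linarith
      · rw [hrj k hk0]
        rw [lt_div_iff₀ (hsj k hk0)]
        linarith [hsj k hk0]
    have hV1 : 1 < V := lt_of_lt_of_le hrk (hA k)
    -- each term nonneg, some term positive
    have hnn : ∀ i ∈ Finset.univ, 0 ≤ (p i * w i) * (r i - 1) := by
      intro i _
      rcases eq_or_lt_of_le (hpnn i) with h | h
      · simp [← h]
      · have hri : r i = V := hB i h
        exact le_of_lt (mul_pos (mul_pos h (hwpos i)) (by rw [hri]; linarith))
    obtain ⟨m, -, hm⟩ : ∃ m ∈ Finset.univ, 0 < p m := by
      by_contra hcc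
      push_neg at hcc
      have : ∑ j, p j = 0 := Finset.sum_eq_zero fun j _ =>
        le_antisymm (hcc j (Finset.mem_univ j)) (hpnn j)
      rw [hpsum] at this; norm_num at this
    have hmpos : 0 < (p m * w m) * (r m - 1) := by
      have hrm : r m = V := hB m hm
      exact mul_pos (mul_pos hm (hwpos m)) (by rw [hrm]; linarith)
    have := Finset.sum_pos' hnn ⟨m, Finset.mem_univ m, hmpos⟩
    linarith
  -- V = 1
  have hrV : ∀ j, r j = V := fun j => hB j (hppos j)
  have hsumw : 0 < ∑ j, p j * w j :=
    Finset.sum_pos (fun i _ => mul_pos (hppos i) (hwpos i)) Finset.univ_nonempty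
  have hV1 : V = 1 := by
    have : (∑ j, p j * w j) * (V - 1) = 0 := by
      rw [Finset.sum_mul, ← hsum0]
      exact Finset.sum_congr rfl fun j _ => by rw [hrV j]
    rcases mul_eq_zero.mp this with h | h
    · linarith
    · linarith
  -- conclude
  refine ⟨hppos, fun j => ?_⟩
  by_cases hj : j = 0
  · subst hj
    have : r 0 = 1 := by rw [hrV 0, hV1]
    rw [hr0, div_eq_one_iff_eq (by linarith : s 0 + 1 ≠ 0)] at this
    linarith
  · have : r j = 1 := by rw [hrV j, hV1]
    rw [hrj j hj, div_eq_one_iff_eq (ne_of_gt (hsj j hj))] at this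
    exact this
end

section
/- Consider n agents and g goods, with prices p ∈ EuclideanSpace ℝ (Fin g) satisfying p k ≥ 0 for all k. For each i ∈ Fin n let Y_i ⊆ EuclideanSpace ℝ (Fin g) be a set of feasible production points, let y_i ∈ Y_i satisfy ⟪p, y⟫ ≤ ⟪p, y_i⟫ for all y ∈ Y_i (profit maximization), let f_i : EuclideanSpace ℝ (Fin g) → ℝ be a utility function that is locally non-satiated on the nonnegative orthant (for every x with x ≥ 0 componentwise and every ε > 0 there is x' ≥ 0 with ‖x' − x‖ < ε and f_i x' > f_i x), and let x_i ≥ 0 satisfy ⟪p, x_i⟫ ≤ ⟪p, y_i⟫ and f_i y ≤ f_i x_i for every y ≥ 0 with ⟪p, y⟫ ≤ ⟪p, y_i⟫ (utility maximization in the budget set determined by earnings ⟪p, y_i⟫). Then there do not exist x'_i ≥ 0 and y'_i ∈ Y_i (i ∈ Fin n) with ∑_i x'_i ≤ ∑_i y'_i componentwise, f_i (x'_i) ≥ f_i (x_i) for all i, and f_{i₀} (x'_{i₀}) > f_{i₀} (x_{i₀}) for some i₀. -/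
/-!
If some agent could be made strictly better off and nobody worse off, then, at equilibrium
prices, the new bundles would cost more in total than the equilibrium earnings: a strictly
preferred bundle is unaffordable by utility maximization, and by local non-satiation a weakly
preferred one cannot be strictly cheaper than the budget. But profit maximization bounds the
value of any alternative production by the equilibrium earnings, and with nonnegative prices
a feasible allocation is worth at most what is produced.
-/

open Finset Topology

def LocallyNonsatiatedOn {E : Type*} [SeminormedAddCommGroup E] (f : E → ℝ) (S : Set E) :
    Prop :=
  ∀ x ∈ S, ∀ ε > 0, ∃ x' ∈ S, ‖x' - x‖ < ε ∧ f x < f x'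

namespace LocallyNonsatiatedOn

theorem exists_mem_nhds {E : Type*} [SeminormedAddCommGroup E] {f : E → ℝ} {S : Set E}
    (hf : LocallyNonsatiatedOn f S) {x : E} (hx : x ∈ S) {U : Set E} (hU : U ∈ 𝓝 x) : ∃ x' ∈ S ∩ U, f x < f x' := by
  obtain ⟨ε, hε, hball⟩ := Metric.mem_nhds_iff.mp hU
  obtain ⟨x', hx'S, hclose, hlt⟩ := hf x hx ε hε
  exact ⟨x', ⟨hx'S, hball (by rwa [Metric.mem_ball, dist_eq_norm])⟩, hlt⟩

theorem le_inner_of_le {E : Type*} [NormedAddCommGroup E] [InnerProductSpace ℝ E]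
    {f : E → ℝ} {S : Set E} (hf : LocallyNonsatiatedOn f S) {p : E} {b u : ℝ}
    (hopt : ∀ z ∈ S, inner ℝ p z ≤ b → f z ≤ u) {z : E} (hz : z ∈ S) (hu : u ≤ f z) :
    b ≤ inner ℝ p z := by
  by_contra! hcheap
  have hnhds : {w | inner ℝ p w < b} ∈ 𝓝 z :=
    (isOpen_lt (continuous_const.inner continuous_id) continuous_const).mem_nhds hcheap
  obtain ⟨z', ⟨hz'S, hz'cheap⟩, hbetter⟩ := hf.exists_mem_nhds hz hnhds
  exact not_lt.mpr (hopt z' hz'S hz'cheap.le) (hu.trans_lt hbetter)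

end LocallyNonsatiatedOn

theorem EuclideanSpace.inner_le_inner_of_nonneg_of_le {ι : Type*} [Fintype ι]
    {p u v : EuclideanSpace ℝ ι} (hp : ∀ k, 0 ≤ p k) (huv : ∀ k, u k ≤ v k) :
    inner ℝ p u ≤ inner ℝ p v := by
  simp only [PiLp.inner_apply, RCLike.inner_apply, conj_trivial]
  exact sum_le_sum fun k _ => mul_le_mul_of_nonneg_right (huv k) (hp k)

theorem stmt12_general (n g : ℕ) (p : EuclideanSpace ℝ (Fin g)) (hp : ∀ k, 0 ≤ p k)
    (Y : Fin n → Set (EuclideanSpace ℝ (Fin g)))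
    (y : Fin n → EuclideanSpace ℝ (Fin g))
    (hprofit : ∀ i, ∀ y' ∈ Y i, (inner ℝ p y' : ℝ) ≤ (inner ℝ p (y i) : ℝ))
    (f : Fin n → EuclideanSpace ℝ (Fin g) → ℝ)
    (hlns : ∀ (i : Fin n) (x : EuclideanSpace ℝ (Fin g)), (∀ k, 0 ≤ x k) →
      ∀ ε : ℝ, 0 < ε →
        ∃ x' : EuclideanSpace ℝ (Fin g),
          (∀ k, 0 ≤ x' k) ∧ ‖x' - x‖ < ε ∧ f i x < f i x')
    (x : Fin n → EuclideanSpace ℝ (Fin g))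
    (hopt : ∀ i, ∀ z : EuclideanSpace ℝ (Fin g), (∀ k, 0 ≤ z k) →
      (inner ℝ p z : ℝ) ≤ (inner ℝ p (y i) : ℝ) → f i z ≤ f i (x i)) :
    ¬ ∃ (x' y' : Fin n → EuclideanSpace ℝ (Fin g)),
        (∀ i k, 0 ≤ x' i k) ∧ (∀ i, y' i ∈ Y i) ∧
        (∀ k, ∑ i, x' i k ≤ ∑ i, y' i k) ∧
        (∀ i, f i (x i) ≤ f i (x' i)) ∧
        (∃ i₀, f i₀ (x i₀) < f i₀ (x' i₀)) := by
  rintro ⟨x', y', hx'0, hy'Y, hfeas, hge, i₀, hstrict⟩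
  have hspend i : inner ℝ p (y i) ≤ inner ℝ p (x' i) :=
    LocallyNonsatiatedOn.le_inner_of_le (S := {z : EuclideanSpace ℝ (Fin g) | ∀ k, 0 ≤ z k})
      (hlns i) (hopt i) (hx'0 i) (hge i)
  have hspend₀ : inner ℝ p (y i₀) < inner ℝ p (x' i₀) :=
    lt_of_not_ge fun h => not_lt.mpr (hopt i₀ _ (hx'0 i₀) h) hstrict
  have hearnings : ∑ i, inner ℝ p (y i) < ∑ i, inner ℝ p (x' i) :=
    sum_lt_sum (fun i _ => hspend i) ⟨i₀, mem_univ _, hspend₀⟩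
  have hproduction : ∑ i, inner ℝ p (y' i) ≤ ∑ i, inner ℝ p (y i) :=
    sum_le_sum fun i _ => hprofit i (y' i) (hy'Y i)
  have hfeasible : inner ℝ p (∑ i, x' i) ≤ inner ℝ p (∑ i, y' i) :=
    EuclideanSpace.inner_le_inner_of_nonneg_of_le hp (by simpa using hfeas)
  rw [inner_sum, inner_sum] at hfeasible
  linarith

/-- Paper's First Welfare Theorem (Theorem 6.1): equilibrium utilities are
(partially) Pareto optimal — no alternative feasible production and allocation
of the conventional goods makes every agent at least as well off and some agent
strictly better off. -/
theorem stmt12 (n g : ℕ) (p : EuclideanSpace ℝ (Fin g)) (hp : ∀ k, 0 ≤ p k)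
    (Y : Fin n → Set (EuclideanSpace ℝ (Fin g)))
    (y : Fin n → EuclideanSpace ℝ (Fin g)) (hyY : ∀ i, y i ∈ Y i)
    (hprofit : ∀ i, ∀ y' ∈ Y i, (inner ℝ p y' : ℝ) ≤ (inner ℝ p (y i) : ℝ))
    (f : Fin n → EuclideanSpace ℝ (Fin g) → ℝ)
    (hlns : ∀ (i : Fin n) (x : EuclideanSpace ℝ (Fin g)), (∀ k, 0 ≤ x k) →
      ∀ ε : ℝ, 0 < ε →
        ∃ x' : EuclideanSpace ℝ (Fin g),
          (∀ k, 0 ≤ x' k) ∧ ‖x' - x‖ < ε ∧ f i x < f i x')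
    (x : Fin n → EuclideanSpace ℝ (Fin g))
    (hx0 : ∀ i k, 0 ≤ x i k)
    (hbudget : ∀ i, (inner ℝ p (x i) : ℝ) ≤ (inner ℝ p (y i) : ℝ))
    (hopt : ∀ i, ∀ z : EuclideanSpace ℝ (Fin g), (∀ k, 0 ≤ z k) →
      (inner ℝ p z : ℝ) ≤ (inner ℝ p (y i) : ℝ) → f i z ≤ f i (x i)) :
    ¬ ∃ (x' y' : Fin n → EuclideanSpace ℝ (Fin g)),
        (∀ i k, 0 ≤ x' i k) ∧ (∀ i, y' i ∈ Y i) ∧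
        (∀ k, ∑ i, x' i k ≤ ∑ i, y' i k) ∧
        (∀ i, f i (x i) ≤ f i (x' i)) ∧
        (∃ i₀, f i₀ (x i₀) < f i₀ (x' i₀)) :=
  stmt12_general n g p hp Y y hprofit f hlns x hopt
end
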